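/- arXiv:math/0602470 — 2 statements merged into one kernel-verified Lean document; each statement's English description precedes it below -/
import Mathlib

section
/- Let L > 0 and C > 0. For every integer n ≥ 1 there exists a constant c = c(n, L, C) > 0 such that for every v₀ ∈ C^∞([0,L]) with sup_{[0,L]} |v₀| ≤ C and every n-th Dirichlet eigenfunction φ of S = −d²/ds² + v₀ (i.e. a nonzero φ ∈ C²([0,L]) with −φ″ + v₀φ = μφ on (0,L), φ(0) = φ(L) = 0, and exactly n−1 zeros in (0,L)) normalized by ∫₀^L φ(s)² ds = 1, one has ‖φ‖_{C²([0,L])} ≤ 1/c, i.e. sup_{[0,L]} |φ| ≤ 1/c, sup_{[0,L]} |φ′| ≤ 1/c, and sup_{[0,L]} |φ″| ≤ 1/c. -/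
set_option maxHeartbeats 1000000

open MeasureTheory Set

lemma reg1 {φ : ℝ → ℝ} (hφ : ContDiff ℝ 2 φ) : ContDiff ℝ 1 (deriv φ) := by
  have h : ContDiff ℝ (1+1) φ := by norm_num; exact hφ
  exact (contDiff_succ_iff_deriv.mp h).2.2

lemma reg2 {φ : ℝ → ℝ} (hφ : ContDiff ℝ 2 φ) : Continuous (deriv (deriv φ)) := by
  have h1 := reg1 hφ
  have h : ContDiff ℝ (0+1) (deriv φ) := by norm_num; exact h1
  exact ((contDiff_succ_iff_deriv.mp h).2.2).continuous

lemma sturm {C μ k a b : ℝ} {v φ : ℝ → ℝ} (hφ : ContDiff ℝ 2 φ) (hv : Continuous v)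
    (hab : a < b) (hvC : ∀ s ∈ Icc a b, v s ≤ C)
    (hode : ∀ s ∈ Icc a b, -(deriv (deriv φ) s) + v s * φ s = μ * φ s)
    (hpos : ∀ s ∈ Icc a b, 0 < φ s)
    (hk : 0 < k) (hk2 : k^2 = μ - C) (hlen : b - a = Real.pi / k) : False := by
  set W : ℝ → ℝ := fun s => φ s * (k * Real.cos (k*(s-a))) - deriv φ s * Real.sin (k*(s-a)) with hW
  have hWd : ∀ s ∈ Icc a b, HasDerivAt W ((C - v s) * (φ s * Real.sin (k*(s-a)))) s := by
    intro s hs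
    have hlin : HasDerivAt (fun s => k*(s-a)) k s := by
      simpa using ((hasDerivAt_id s).sub_const a).const_mul k
    have hcos : HasDerivAt (fun s => Real.cos (k*(s-a))) (-Real.sin (k*(s-a)) * k) s :=
      (Real.hasDerivAt_cos _).comp s hlin
    have hsin : HasDerivAt (fun s => Real.sin (k*(s-a))) (Real.cos (k*(s-a)) * k) s :=
      (Real.hasDerivAt_sin _).comp s hlin
    have hp : HasDerivAt φ (deriv φ s) s :=
      ((hφ.differentiable (by norm_num)) s).hasDerivAt
    have hpp : HasDerivAt (deriv φ) (deriv (deriv φ) s) s :=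
      (((reg1 hφ).differentiable one_ne_zero) s).hasDerivAt
    have h2 : deriv (deriv φ) s = v s * φ s - μ * φ s := by have := hode s hs; linarith
    have := (hp.mul (hcos.const_mul k)).sub (hpp.mul hsin)
    refine this.congr_deriv ?_
    rw [h2]
    have hk2' : μ = C + k^2 := by linarith
    rw [hk2']; ring
  have hg : Continuous fun s => (C - v s) * (φ s * Real.sin (k*(s-a))) := by
    apply (continuous_const.sub hv).mul
    exact hφ.continuous.mul (Real.continuous_sin.comp (by continuity))
  have hint : W b - W a = ∫ s in a..b, (C - v s) * (φ s * Real.sin (k*(s-a))) := by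
    rw [intervalIntegral.integral_eq_sub_of_hasDerivAt (fun x hx => hWd x (by
      rwa [uIcc_of_le hab.le] at hx)) (hg.intervalIntegrable a b)]
  have hnn : 0 ≤ W b - W a := by
    rw [hint]
    apply intervalIntegral.integral_nonneg hab.le
    intro s hs
    have h1 : 0 ≤ C - v s := by have := hvC s hs; linarith
    have h2 : 0 < φ s := hpos s hs
    have h3 : 0 ≤ Real.sin (k*(s-a)) := by
      apply Real.sin_nonneg_of_nonneg_of_le_pi
      · have := hs.1; nlinarith
      · have hsb : s - a ≤ b - a := by have := hs.2; linarith
        have : k * (s - a) ≤ k * (b - a) := by nlinarith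
        rwa [hlen, mul_div_cancel₀ _ hk.ne'] at this
    positivity
  have hWa : W a = φ a * k := by simp [hW]
  have hWb : W b = -(φ b * k) := by
    have harg : k * (b - a) = Real.pi := by rw [hlen, mul_div_cancel₀ _ hk.ne']
    simp [hW, harg]
  have hpa := hpos a (by constructor <;> linarith)
  have hpb := hpos b (by constructor <;> linarith)
  rw [hWa, hWb] at hnn
  nlinarith

lemma sign_const {φ : ℝ → ℝ} (hc : Continuous φ) {a b : ℝ} (hab : a ≤ b)
    (hnz : ∀ s ∈ Icc a b, φ s ≠ 0) (ha : 0 < φ a) : ∀ s ∈ Icc a b, 0 < φ s := by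
  intro s hs
  rcases lt_or_ge 0 (φ s) with h | h
  · exact h
  · exfalso
    have h0 : (0:ℝ) ∈ uIcc (φ a) (φ s) := by
      rw [Set.mem_uIcc]; right; exact ⟨h, ha.le⟩
    obtain ⟨t, ht, hφt⟩ := intermediate_value_uIcc hc.continuousOn h0
    have : t ∈ Icc a b := by
      have : uIcc a s = Icc a s := uIcc_of_le hs.1
      rw [this] at ht
      exact ⟨ht.1, le_trans ht.2 hs.2⟩
    exact hnz t this hφt

lemma mu_upper {L C : ℝ} (hL : 0 < L) (hC : 0 < C) {n : ℕ} (hn : 1 ≤ n) {v φ : ℝ → ℝ}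
    (hv : Continuous v) (hvC : ∀ s ∈ Icc (0:ℝ) L, |v s| ≤ C) {μ : ℝ} (hφ : ContDiff ℝ 2 φ)
    (hode : ∀ s ∈ Icc (0:ℝ) L, -(deriv (deriv φ) s) + v s * φ s = μ * φ s)
    (hfin : {s ∈ Ioo (0:ℝ) L | φ s = 0}.Finite)
    (hcard : {s ∈ Ioo (0:ℝ) L | φ s = 0}.ncard = n - 1) :
    μ ≤ C + (n * Real.pi / L)^2 := by
  by_contra hμ
  push_neg at hμ
  have hπ := Real.pi_pos
  have hn0 : (0:ℝ) < n := by exact_mod_cast hn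
  have hq : (0:ℝ) ≤ (n * Real.pi / L)^2 := sq_nonneg _
  have hμC : 0 < μ - C := by nlinarith
  set k := Real.sqrt (μ - C) with hkdef
  have hk : 0 < k := Real.sqrt_pos.mpr hμC
  have hk2 : k^2 = μ - C := Real.sq_sqrt hμC.le
  have hkgt : n * Real.pi / L < k := by
    have h1 : (0:ℝ) ≤ n * Real.pi / L := by positivity
    nlinarith
  set g := L / n with hgdef
  have hg : 0 < g := by positivity
  have hπk : Real.pi / k < g := by
    rw [div_lt_iff₀ hk]
    have : n * Real.pi / L * g = Real.pi := by rw [hgdef]; field_simp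
    nlinarith
  set Z := {s ∈ Ioo (0:ℝ) L | φ s = 0} with hZ
  obtain ⟨j, hjn, hjmiss⟩ : ∃ j < n, ∀ z ∈ Z, ⌊z / g⌋₊ ≠ j := by
    by_contra hcon
    push_neg at hcon
    have hsub : Finset.range n ⊆ hfin.toFinset.image (fun z => ⌊z / g⌋₊) := by
      intro j hj
      obtain ⟨z, hz, hfl⟩ := hcon j (Finset.mem_range.mp hj)
      exact Finset.mem_image.mpr ⟨z, hfin.mem_toFinset.mpr hz, hfl⟩
    have hcard' : hfin.toFinset.card = n - 1 := by
      rw [← Set.ncard_eq_toFinset_card _ hfin]; exact hcard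
    have h1 := Finset.card_le_card hsub
    rw [Finset.card_range] at h1
    have h2 := le_trans h1 (Finset.card_image_le)
    omega
  set ε := (g - Real.pi / k) / 2 with hεdef
  have hε : 0 < ε := by simp only [hεdef]; linarith
  set a := j * g + ε with hadef
  set b := a + Real.pi / k with hbdef
  have hπkpos : 0 < Real.pi / k := div_pos hπ hk
  have hab : a < b := by simp only [hbdef]; linarith
  have hj1 : (j:ℝ) + 1 ≤ n := by exact_mod_cast hjn
  have hsub0 : Icc a b ⊆ Ioo ((j:ℝ) * g) (((j:ℝ)+1) * g) := by
    intro s hs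
    constructor
    · have := hs.1; simp only [hadef] at this ⊢; linarith
    · have := hs.2
      have hb' : b = j * g + (g + Real.pi / k) / 2 := by
        simp only [hbdef, hadef, hεdef]; ring
      rw [hb'] at this
      nlinarith
  have hsubL : Ioo ((j:ℝ) * g) (((j:ℝ)+1) * g) ⊆ Ioo (0:ℝ) L := by
    intro s hs
    constructor
    · have h0 : (0:ℝ) ≤ (j:ℝ) * g := by positivity
      linarith [hs.1]
    · have h1 : ((j:ℝ)+1) * g ≤ n * g := by nlinarith
      have hng : (n:ℝ) * g = L := by rw [hgdef]; exact mul_div_cancel₀ _ hn0.ne'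
      linarith [hs.2]
  have hsubIcc : Icc a b ⊆ Icc (0:ℝ) L := fun s hs => by
    have := hsubL (hsub0 hs); exact ⟨this.1.le, this.2.le⟩
  have hnz : ∀ s ∈ Icc a b, φ s ≠ 0 := by
    intro s hs hφs
    have hs' := hsub0 hs
    have hsL := hsubL hs'
    have hzZ : s ∈ Z := ⟨hsL, hφs⟩
    apply hjmiss s hzZ
    have hs0 : (0:ℝ) ≤ s / g := div_nonneg hsL.1.le hg.le
    rw [Nat.floor_eq_iff hs0]
    constructor
    · rw [le_div_iff₀ hg]; exact hs'.1.le
    · rw [div_lt_iff₀ hg]; linarith [hs'.2]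
  have hvC' : ∀ s ∈ Icc a b, v s ≤ C := fun s hs => (abs_le.mp (hvC s (hsubIcc hs))).2
  have hode' : ∀ s ∈ Icc a b, -(deriv (deriv φ) s) + v s * φ s = μ * φ s :=
    fun s hs => hode s (hsubIcc hs)
  have hmema : a ∈ Icc a b := ⟨le_refl a, hab.le⟩
  rcases (hnz a hmema).lt_or_gt with hneg | hposa
  · set ψ : ℝ → ℝ := fun s => -φ s with hψ
    have hψc : ContDiff ℝ 2 ψ := hφ.neg
    have hd1 : deriv ψ = fun s => -(deriv φ s) := by
      funext s; exact deriv.neg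
    have hd2 : ∀ s, deriv (deriv ψ) s = -(deriv (deriv φ) s) := by
      intro s; rw [hd1]; exact deriv.neg
    have hodeψ : ∀ s ∈ Icc a b, -(deriv (deriv ψ) s) + v s * ψ s = μ * ψ s := by
      intro s hs; rw [hd2]; have := hode' s hs; simp only [hψ]; ring_nf; linarith
    have hposψ : ∀ s ∈ Icc a b, 0 < ψ s := by
      apply sign_const hφ.continuous.neg hab.le
      · intro s hs h0
        exact hnz s hs (by simpa [hψ] using h0)
      · simpa [hψ] using hneg
    exact sturm hψc hv hab hvC' hodeψ hposψ hk hk2 (by simp [hbdef])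
  · have hposφ : ∀ s ∈ Icc a b, 0 < φ s := sign_const hφ.continuous hab.le hnz hposa
    exact sturm hφ hv hab hvC' hode' hposφ hk hk2 (by simp [hbdef])

lemma ode_Icc {L μ : ℝ} {v φ : ℝ → ℝ} (hL : 0 < L) (hv : Continuous v) (hφ : ContDiff ℝ 2 φ)
    (hode : ∀ s ∈ Ioo (0:ℝ) L, -(deriv (deriv φ) s) + v s * φ s = μ * φ s) :
    ∀ s ∈ Icc (0:ℝ) L, -(deriv (deriv φ) s) + v s * φ s = μ * φ s := by
  intro s hs
  set f : ℝ → ℝ := fun s => -(deriv (deriv φ) s) + v s * φ s - μ * φ s with hf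
  have hfc : Continuous f :=
    ((reg2 hφ).neg.add (hv.mul hφ.continuous)).sub (continuous_const.mul hφ.continuous)
  have hcl : IsClosed {s | f s = 0} := isClosed_eq hfc continuous_const
  have hsub : Icc (0:ℝ) L ⊆ {s | f s = 0} := by
    rw [← closure_Ioo hL.ne]
    apply closure_minimal _ hcl
    intro x hx
    have := hode x hx
    simp only [hf, Set.mem_setOf_eq]
    linarith
  have := hsub hs
  simp only [hf, Set.mem_setOf_eq] at this
  linarith

lemma int_sub_interval {f : ℝ → ℝ} {a b c d : ℝ} (hf : Continuous f)
    (hnn : ∀ x ∈ Icc c d, 0 ≤ f x) (h1 : c ≤ a) (h2 : a ≤ b) (h3 : b ≤ d) :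
    ∫ x in a..b, f x ≤ ∫ x in c..d, f x := by
  have e1 : (∫ x in c..a, f x) + ∫ x in a..b, f x = ∫ x in c..b, f x :=
    intervalIntegral.integral_add_adjacent_intervals (μ := volume) (hf.intervalIntegrable _ _)
      (hf.intervalIntegrable _ _)
  have e2 : (∫ x in c..b, f x) + ∫ x in b..d, f x = ∫ x in c..d, f x :=
    intervalIntegral.integral_add_adjacent_intervals (μ := volume) (hf.intervalIntegrable _ _)
      (hf.intervalIntegrable _ _)
  have n1 : 0 ≤ ∫ x in c..a, f x :=
    intervalIntegral.integral_nonneg h1 (fun x hx => hnn x ⟨hx.1, le_trans hx.2 (h2.trans h3)⟩)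
  have n2 : 0 ≤ ∫ x in b..d, f x :=
    intervalIntegral.integral_nonneg h3 (fun x hx => hnn x ⟨le_trans (h1.trans h2) hx.1, hx.2⟩)
  linarith


lemma two_mul_le_sq (a b : ℝ) : 2*a*b ≤ a^2 + b^2 := by nlinarith [sq_nonneg (a-b)]

lemma abs_two_mul_le_sq (a b : ℝ) : |2*a*b| ≤ a^2 + b^2 := by
  rw [abs_le]
  constructor
  · nlinarith [sq_nonneg (a+b)]
  · nlinarith [sq_nonneg (a-b)]

lemma le_sq_self {x : ℝ} (h : 1 ≤ x) : x ≤ x^2 := by nlinarith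

/-- `φ` is an `n`-th Dirichlet eigenfunction of `S = -d²/ds² + v` on `(0, L)` with
eigenvalue `μ`: a nonzero `C²` function solving `-φ'' + vφ = μφ` on `(0,L)`, vanishing at
`0` and `L`, and having exactly `n - 1` zeros in the open interval `(0, L)`. -/
def IsDirichletEF (L : ℝ) (v : ℝ → ℝ) (n : ℕ) (μ : ℝ) (φ : ℝ → ℝ) : Prop :=
  ContDiff ℝ 2 φ ∧ (∃ s ∈ Set.Icc (0:ℝ) L, φ s ≠ 0) ∧
  (∀ s ∈ Set.Ioo (0:ℝ) L, -(deriv (deriv φ) s) + v s * φ s = μ * φ s) ∧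
  φ 0 = 0 ∧ φ L = 0 ∧
  {s ∈ Set.Ioo (0:ℝ) L | φ s = 0}.Finite ∧
  {s ∈ Set.Ioo (0:ℝ) L | φ s = 0}.ncard = n - 1

theorem stmt1 (L C : ℝ) (hL : 0 < L) (hC : 0 < C) (n : ℕ) (hn : 1 ≤ n) :
    ∃ c > 0, ∀ v : ℝ → ℝ, ContDiff ℝ (⊤ : ℕ∞) v → (∀ s ∈ Set.Icc (0:ℝ) L, |v s| ≤ C) →
      ∀ (μ : ℝ) (φ : ℝ → ℝ), IsDirichletEF L v n μ φ →
        (∫ s in Set.Ioo (0:ℝ) L, (φ s) ^ 2) = 1 →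
        ∀ s ∈ Set.Icc (0:ℝ) L,
          |φ s| ≤ 1 / c ∧ |deriv φ s| ≤ 1 / c ∧ |deriv (deriv φ) s| ≤ 1 / c := by
  set K := C + (n * Real.pi / L)^2 with hKdef
  set M := C + K with hMdef
  have hKC : C ≤ K := by simp only [hKdef]; nlinarith [sq_nonneg (n * Real.pi / L)]
  have hM0 : 0 < M := by simp only [hMdef]; linarith
  set D := (1 + M)^2 with hDdef
  have hD0 : 0 < D := by positivity
  have hD1 : 1 ≤ D := by nlinarith
  clear_value K M D
  refine ⟨1 / D, by positivity, ?_⟩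
  intro v hv hvC μ φ hEF hnorm
  obtain ⟨hφ2, hne, hodeo, h0, hLz, hfin, hcard⟩ := hEF
  have hvc : Continuous v := hv.continuous
  have hodeI := ode_Icc hL hvc hφ2 hodeo
  have hcφ : Continuous φ := hφ2.continuous
  have hc1 : Continuous (deriv φ) := (reg1 hφ2).continuous
  have hc2 : Continuous (deriv (deriv φ)) := reg2 hφ2
  have hdφ : ∀ x, HasDerivAt φ (deriv φ x) x :=
    fun x => ((hφ2.differentiable (by norm_num)) x).hasDerivAt
  have hdφ' : ∀ x, HasDerivAt (deriv φ) (deriv (deriv φ) x) x :=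
    fun x => (((reg1 hφ2).differentiable one_ne_zero) x).hasDerivAt
  have hInorm : (∫ s in (0:ℝ)..L, φ s ^ 2) = 1 := by
    rw [intervalIntegral.integral_of_le hL.le, MeasureTheory.integral_Ioc_eq_integral_Ioo]
    exact hnorm
  -- integration by parts
  have hparts := intervalIntegral.integral_mul_deriv_eq_deriv_mul
    (u := φ) (v := deriv φ) (u' := deriv φ) (v' := deriv (deriv φ)) (a := 0) (b := L)
    (fun x _ => hdφ x) (fun x _ => hdφ' x) (hc1.intervalIntegrable 0 L)
    (hc2.intervalIntegrable 0 L)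
  rw [h0, hLz] at hparts
  simp only [zero_mul, mul_zero, sub_zero, zero_sub] at hparts
  set I1 := ∫ s in (0:ℝ)..L, (deriv φ s)^2 with hI1def
  have hmm : (∫ s in (0:ℝ)..L, deriv φ s * deriv φ s) = I1 := by
    simp only [hI1def, sq]
  have hcongr : (∫ s in (0:ℝ)..L, φ s * deriv (deriv φ) s)
      = ∫ s in (0:ℝ)..L, (v s * φ s^2 - μ * φ s^2) := by
    apply intervalIntegral.integral_congr
    intro x hx
    rw [uIcc_of_le hL.le] at hx
    have h := hodeI x hx
    have h2 : deriv (deriv φ) x = v x * φ x - μ * φ x := by linarith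
    simp only
    rw [h2]; ring
  set Iv := ∫ s in (0:ℝ)..L, v s * φ s^2 with hIvdef
  have hivint : IntervalIntegrable (fun s => v s * φ s^2) volume 0 L :=
    (hvc.mul (hcφ.pow 2)).intervalIntegrable 0 L
  have hmuint : IntervalIntegrable (fun s => μ * φ s^2) volume 0 L :=
    (continuous_const.mul (hcφ.pow 2)).intervalIntegrable 0 L
  have hsplit : (∫ s in (0:ℝ)..L, (v s * φ s^2 - μ * φ s^2)) = Iv - μ := by
    rw [intervalIntegral.integral_sub hivint hmuint, intervalIntegral.integral_const_mul,
      hInorm, mul_one]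
  have hI1eq : I1 = μ - Iv := by
    rw [hcongr, hsplit] at hparts
    rw [hmm] at hparts
    linarith
  have hsqint : IntervalIntegrable (fun s => φ s ^ 2) volume 0 L :=
    (hcφ.pow 2).intervalIntegrable 0 L
  have hconst2 : IntervalIntegrable (fun s => C * φ s ^ 2) volume 0 L :=
    (continuous_const.mul (hcφ.pow 2)).intervalIntegrable 0 L
  have hIvub : Iv ≤ C := by
    have h1 : Iv ≤ ∫ s in (0:ℝ)..L, C * φ s^2 := by
      apply intervalIntegral.integral_mono_on hL.le hivint hconst2
      intro x hx
      exact mul_le_mul_of_nonneg_right (abs_le.mp (hvC x hx)).2 (sq_nonneg _)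
    rwa [intervalIntegral.integral_const_mul, hInorm, mul_one] at h1
  have hIvlb : -C ≤ Iv := by
    have h1 : (∫ s in (0:ℝ)..L, (-C) * φ s^2) ≤ Iv := by
      apply intervalIntegral.integral_mono_on hL.le
        ((continuous_const.mul (hcφ.pow 2)).intervalIntegrable 0 L) hivint
      intro x hx
      exact mul_le_mul_of_nonneg_right (abs_le.mp (hvC x hx)).1 (sq_nonneg _)
    rwa [intervalIntegral.integral_const_mul, hInorm, mul_one] at h1
  have hI1nn : 0 ≤ I1 :=
    intervalIntegral.integral_nonneg hL.le (fun x _ => sq_nonneg _)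
  have hμlow : -C ≤ μ := by linarith
  have hμup : μ ≤ K := by
    rw [hKdef]; exact mu_upper hL hC hn hvc hvC hφ2 hodeI hfin hcard
  have hμabs : |μ| ≤ K := abs_le.mpr ⟨by linarith, hμup⟩
  have hI1le : I1 ≤ M := by simp only [hMdef]; linarith
  -- energy integral
  have hEc : Continuous (fun s => φ s^2 + (deriv φ s)^2) := (hcφ.pow 2).add (hc1.pow 2)
  have hE2int : IntervalIntegrable (fun s => φ s^2 + (deriv φ s)^2) volume 0 L :=
    hEc.intervalIntegrable 0 L
  have hEint : (∫ s in (0:ℝ)..L, (φ s^2 + (deriv φ s)^2)) = 1 + I1 := by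
    rw [intervalIntegral.integral_add (g := fun s => deriv φ s ^ 2) hsqint ((hc1.pow 2).intervalIntegrable 0 L), hInorm]
  -- pointwise bound on φ²
  have hb0 : ∀ s ∈ Icc (0:ℝ) L, φ s^2 ≤ 1 + M := by
    intro s hs
    have hftc : (∫ x in (0:ℝ)..s, 2*φ x*deriv φ x) = φ s^2 - φ 0^2 := by
      apply intervalIntegral.integral_eq_sub_of_hasDerivAt (f := fun x => φ x^2)
      · intro x _
        have := (hdφ x).pow 2
        norm_num at this
        convert this using 1
        try ring
        all_goals rfl
      · exact ((continuous_const.mul hcφ).mul hc1).intervalIntegrable _ _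
    have hle1 : (∫ x in (0:ℝ)..s, 2*φ x*deriv φ x)
        ≤ ∫ x in (0:ℝ)..s, (φ x^2 + (deriv φ x)^2) := by
      apply intervalIntegral.integral_mono_on hs.1
        (((continuous_const.mul hcφ).mul hc1).intervalIntegrable _ _)
        (hEc.intervalIntegrable _ _)
      intro x _
      exact two_mul_le_sq _ _
    have hle2 : (∫ x in (0:ℝ)..s, (φ x^2 + (deriv φ x)^2))
        ≤ ∫ x in (0:ℝ)..L, (φ x^2 + (deriv φ x)^2) :=
      int_sub_interval hEc (fun x _ => by positivity) le_rfl hs.1 hs.2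
    rw [hEint] at hle2
    have h00 : φ 0 ^ 2 = 0 := by rw [h0]; ring
    linarith
  -- Rolle point
  obtain ⟨t, ht, hdt⟩ := exists_deriv_eq_zero hL hcφ.continuousOn (by rw [h0, hLz])
  have htmem : t ∈ Icc (0:ℝ) L := ⟨ht.1.le, ht.2.le⟩
  -- pointwise bound for the integrand 2 φ' φ''
  have hpoint : ∀ x ∈ Icc (0:ℝ) L,
      |2 * deriv φ x * deriv (deriv φ) x| ≤ M * (φ x^2 + (deriv φ x)^2) := by
    intro x hx
    have h := hodeI x hx
    have hvx := abs_le.mp (hvC x hx)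
    have hμa := abs_le.mp hμabs
    have h2 : deriv (deriv φ) x = v x * φ x - μ * φ x := by linarith
    rw [h2]
    have heq : 2 * deriv φ x * (v x * φ x - μ * φ x)
        = (v x - μ) * (2 * φ x * deriv φ x) := by ring
    rw [heq, abs_mul]
    have ha1 : |v x - μ| ≤ M := by
      rw [abs_le]; constructor <;> simp only [hMdef] <;> linarith
    have ha2 : |2 * φ x * deriv φ x| ≤ φ x^2 + (deriv φ x)^2 := abs_two_mul_le_sq _ _
    have := mul_le_mul ha1 ha2 (abs_nonneg _) hM0.le
    exact this
  have hMEc : Continuous (fun x => M * (φ x^2 + (deriv φ x)^2)) := continuous_const.mul hEc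
  have hMEeq : (∫ x in (0:ℝ)..L, M * (φ x^2 + (deriv φ x)^2)) = M * (1 + I1) := by
    rw [intervalIntegral.integral_const_mul, hEint]
  have hgint : Continuous (fun x => 2 * deriv φ x * deriv (deriv φ) x) :=
    (continuous_const.mul hc1).mul hc2
  -- pointwise bound on (φ')²
  have hb1 : ∀ s ∈ Icc (0:ℝ) L, (deriv φ s)^2 ≤ M * (1 + M) := by
    intro s hs
    have hftc : (∫ x in t..s, 2 * deriv φ x * deriv (deriv φ) x)
        = (deriv φ s)^2 - (deriv φ t)^2 := by
      apply intervalIntegral.integral_eq_sub_of_hasDerivAt (f := fun x => (deriv φ x)^2)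
      · intro x _
        have := (hdφ' x).pow 2
        norm_num at this
        convert this using 1
        try ring
        all_goals rfl
      · exact hgint.intervalIntegrable _ _
    have hMint : M * (1 + I1) ≤ M * (1 + M) := by
      have := mul_le_mul_of_nonneg_left (by linarith : (1:ℝ) + I1 ≤ 1 + M) hM0.le
      linarith
    rcases le_total t s with hts | hst
    · have hle1 : (∫ x in t..s, 2 * deriv φ x * deriv (deriv φ) x)
          ≤ ∫ x in t..s, M * (φ x^2 + (deriv φ x)^2) := by
        apply intervalIntegral.integral_mono_on hts (hgint.intervalIntegrable _ _)
          (hMEc.intervalIntegrable _ _)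
        intro x hx
        have hxI : x ∈ Icc (0:ℝ) L := ⟨le_trans htmem.1 hx.1, le_trans hx.2 hs.2⟩
        exact le_trans (le_abs_self _) (hpoint x hxI)
      have hle2 : (∫ x in t..s, M * (φ x^2 + (deriv φ x)^2))
          ≤ ∫ x in (0:ℝ)..L, M * (φ x^2 + (deriv φ x)^2) :=
        int_sub_interval hMEc (fun x _ => by positivity) htmem.1 hts hs.2
      rw [hMEeq] at hle2
      have hdt2 : deriv φ t ^ 2 = 0 := by rw [hdt]; ring
      linarith
    · have hsym : (∫ x in t..s, 2 * deriv φ x * deriv (deriv φ) x)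
          = -∫ x in s..t, 2 * deriv φ x * deriv (deriv φ) x :=
        intervalIntegral.integral_symm s t
      have hle1 : (∫ x in s..t, (-(2 * deriv φ x * deriv (deriv φ) x)))
          ≤ ∫ x in s..t, M * (φ x^2 + (deriv φ x)^2) := by
        apply intervalIntegral.integral_mono_on hst (hgint.neg.intervalIntegrable _ _)
          (hMEc.intervalIntegrable _ _)
        intro x hx
        have hxI : x ∈ Icc (0:ℝ) L := ⟨le_trans hs.1 hx.1, le_trans hx.2 htmem.2⟩
        have := hpoint x hxI
        have := neg_abs_le (2 * deriv φ x * deriv (deriv φ) x)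
        simp only [Pi.neg_apply]; linarith
      have hle2 : (∫ x in s..t, M * (φ x^2 + (deriv φ x)^2))
          ≤ ∫ x in (0:ℝ)..L, M * (φ x^2 + (deriv φ x)^2) :=
        int_sub_interval hMEc (fun x _ => by positivity) hs.1 hst htmem.2
      rw [intervalIntegral.integral_neg] at hle1
      rw [hsym] at hftc
      rw [hMEeq] at hle2
      have hdt2 : deriv φ t ^ 2 = 0 := by rw [hdt]; ring
      linarith
  -- conclude
  intro s hs
  rw [one_div_one_div]
  have hφs2 := hb0 s hs
  have hφ's2 := hb1 s hs
  have h1M : (1:ℝ) ≤ 1 + M := by linarith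
  have hsq1M : (1:ℝ) + M ≤ (1 + M)^2 := le_sq_self (by linarith)
  have hφs : |φ s| ≤ 1 + M :=
    (Real.abs_le_sqrt hφs2).trans (Real.sqrt_le_iff.mpr ⟨by linarith, hsq1M⟩)
  have hMM : M * (1 + M) ≤ (1 + M)^2 := by
    rw [pow_two]
    exact mul_le_mul_of_nonneg_right (by linarith) (by linarith)
  have hφ's : |deriv φ s| ≤ 1 + M :=
    (Real.abs_le_sqrt hφ's2).trans (Real.sqrt_le_iff.mpr ⟨by linarith, by linarith⟩)
  have h := hodeI s hs
  have h2 : deriv (deriv φ) s = (v s - μ) * φ s := by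
    have hexp : (v s - μ) * φ s = v s * φ s - μ * φ s := by ring
    rw [hexp]; linarith
  have hvs := abs_le.mp (hvC s hs)
  have hμa := abs_le.mp hμabs
  have ha1 : |v s - μ| ≤ M := by
    rw [abs_le]; constructor <;> simp only [hMdef] <;> linarith
  have hφ''s : |deriv (deriv φ) s| ≤ M * (1 + M) := by
    rw [h2, abs_mul]
    exact mul_le_mul ha1 hφs (abs_nonneg _) hM0.le
  have h1MD : 1 + M ≤ D := by rw [hDdef]; exact hsq1M
  have h3MD : M * (1 + M) ≤ D := by rw [hDdef]; exact hMM
  exact ⟨hφs.trans h1MD, hφ's.trans h1MD, hφ''s.trans h3MD⟩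
end

section
/- Let L > 0 and C > 0. For every integer n ≥ 1 there exists a constant c = c(n, L, C) > 0 such that for every continuous v₀ : [0,L] → ℝ with sup_{[0,L]} |v₀| ≤ C and every n-th Dirichlet eigenfunction φ of S = −d²/ds² + v₀ (a nonzero φ ∈ C²([0,L]) with −φ″ + v₀φ = μφ on (0,L), φ(0) = φ(L) = 0, and exactly n−1 zeros in (0,L)) normalized by ∫₀^L φ(s)² ds = 1, one has |φ(s)| ≥ c · dist(s, Z) for all s ∈ [0,L], where Z := {s ∈ [0,L] : φ(s) = 0}. -/
/-!
The eigenvalue is bounded a priori: the `n + 1` zeros of `φ` in `[0, L]` leave a nodal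
interval of length at least `L / n`, on which `φ` has one sign; convexity then excludes
`μ < -C`, and Sturm comparison with a sine excludes `μ > C + (π n / L)²`. So
`|v - μ| ≤ K := 2 C + (π n / L)² + 1`, and the energy `φ'² + K φ²` varies at most by the
factor `exp (2 K L)` on `[0, L]`. At a maximum point of `|φ|` it equals `K M²`, where
`M = max |φ| ≥ L^(-1/2)` by the normalisation.
Hence where `|φ s|` is small, `φ' s` is bounded below, and as `|φ''| ≤ K M`, a Newton step of
length `O(|φ s|)` from `s` reaches a zero of `φ`.
-/

open MeasureTheory

open Set Real

theorem Fin.sum_univ_succ_sub_castSucc {M : Type*} [AddCommGroup M] {n : ℕ}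
    (z : Fin (n + 1) → M) :
    ∑ i : Fin n, (z i.succ - z i.castSucc) = z (Fin.last n) - z 0 := by
  rw [Finset.sum_sub_distrib, sub_eq_sub_iff_add_eq_add, add_comm (z (Fin.last n)),
    ← Fin.sum_univ_castSucc, add_comm, ← Fin.sum_univ_succ]

theorem Fin.exists_div_le_succ_sub_castSucc {n : ℕ} (hn : n ≠ 0) (z : Fin (n + 1) → ℝ) :
    ∃ i : Fin n, (z (Fin.last n) - z 0) / n ≤ z i.succ - z i.castSucc := by
  have : NeZero n := ⟨hn⟩
  obtain ⟨i, -, hi⟩ := Finset.exists_le_of_sum_le (Finset.univ_nonempty (α := Fin n))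
    (f := fun _ => (z (Fin.last n) - z 0) / n) (g := fun i => z i.succ - z i.castSucc) (by
      rw [Fin.sum_univ_succ_sub_castSucc, Finset.sum_const, Finset.card_univ, Fintype.card_fin,
        nsmul_eq_mul, mul_div_cancel₀ _ (Nat.cast_ne_zero.mpr hn)])
  exact ⟨i, hi⟩

theorem Set.Finite.exists_gap {Z : Set ℝ} (hZ : Z.Finite) {a b : ℝ} (hsub : Z ⊆ Icc a b)
    (ha : a ∈ Z) (hb : b ∈ Z) {n : ℕ} (hn : n ≠ 0) (hcard : Z.ncard = n + 1) :
    ∃ x ∈ Z, ∃ y ∈ Z, x < y ∧ (b - a) / n ≤ y - x ∧ ∀ t ∈ Ioo x y, t ∉ Z := by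
  have hF : hZ.toFinset.card = n + 1 := by rwa [← Set.ncard_eq_toFinset_card _ hZ]
  set e := hZ.toFinset.orderEmbOfFin hF
  have he : ∀ i, e i ∈ Z := fun i => hZ.mem_toFinset.mp (Finset.orderEmbOfFin_mem _ _ i)
  have hrange : ∀ t ∈ Z, ∃ i, e i = t := fun t ht => by
    rw [← Set.mem_range, Finset.range_orderEmbOfFin, hZ.coe_toFinset]
    exact ht
  have he0 : e 0 = a := le_antisymm
    (by obtain ⟨j, rfl⟩ := hrange a ha; exact e.monotone (Fin.zero_le j)) (hsub (he 0)).1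
  have helast : e (Fin.last n) = b := le_antisymm (hsub (he _)).2
    (by obtain ⟨j, rfl⟩ := hrange b hb; exact e.monotone (Fin.le_last j))
  obtain ⟨i, hi⟩ := Fin.exists_div_le_succ_sub_castSucc hn e
  refine ⟨e i.castSucc, he _, e i.succ, he _, e.strictMono Fin.castSucc_lt_succ, ?_, ?_⟩
  · rwa [he0, helast] at hi
  · rintro t ⟨hlt, hgt⟩ htZ
    obtain ⟨j, rfl⟩ := hrange t htZ
    have h₁ := e.lt_iff_lt.mp hlt
    have h₂ := e.lt_iff_lt.mp hgt
    rw [Fin.lt_def, Fin.val_castSucc] at h₁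
    rw [Fin.lt_def, Fin.val_succ] at h₂
    omega

theorem IsPreconnected.exists_mul_pos {s : Set ℝ} {f : ℝ → ℝ} (hs : IsPreconnected s)
    (hf : ContinuousOn f s) (hne : ∀ t ∈ s, f t ≠ 0) :
    ∃ σ : ℝ, ∀ t ∈ s, 0 < σ * f t := by
  by_contra! h
  obtain ⟨t₁, ht₁, hneg⟩ := h 1
  obtain ⟨t₂, ht₂, hpos⟩ := h (-1)
  obtain ⟨t, ht, h0⟩ := hs.intermediate_value ht₁ ht₂ hf (⟨by linarith, by linarith⟩ :
    (0 : ℝ) ∈ Icc (f t₁) (f t₂))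
  exact hne t ht h0

section NodalInterval

variable {φ q : ℝ → ℝ} {a b : ℝ}

theorem exists_nonpos_of_pos_solution (hab : a < b) (hφ : Differentiable ℝ φ)
    (hode : ∀ t ∈ Ioo a b, deriv (deriv φ) t = q t * φ t) (hpos : ∀ t ∈ Ioo a b, 0 < φ t)
    (ha : φ a = 0) (hb : φ b = 0) : ∃ t ∈ Ioo a b, q t ≤ 0 := by
  by_contra! hq
  have hconv : StrictConvexOn ℝ (Icc a b) φ := by
    refine strictConvexOn_of_deriv2_pos (convex_Icc a b) hφ.continuous.continuousOn fun t ht => ?_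
    rw [interior_Icc] at ht
    simpa only [Function.iterate_succ, Function.iterate_zero, Function.comp_apply, id,
      hode t ht] using mul_pos (hq t ht) (hpos t ht)
  have hmid := hconv.2 (left_mem_Icc.mpr hab.le) (right_mem_Icc.mpr hab.le) hab.ne
    (by norm_num : (0 : ℝ) < 1 / 2) (by norm_num : (0 : ℝ) < 1 / 2) (by norm_num)
  simp only [ha, hb, smul_eq_mul, mul_zero, add_zero] at hmid
  linarith [hpos _ (⟨by linarith, by linarith⟩ : 1 / 2 * a + 1 / 2 * b ∈ Ioo a b)]

/-- Sturm comparison with `sin (π (t - a) / (b - a))`: if `q < -(π / (b - a))²`, the Wronskian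
`W` below is strictly increasing, yet it vanishes at both ends. -/
theorem exists_ge_of_pos_solution (hab : a < b) (hφ : Differentiable ℝ φ)
    (hφ' : Differentiable ℝ (deriv φ))
    (hode : ∀ t ∈ Ioo a b, deriv (deriv φ) t = q t * φ t)
    (hpos : ∀ t ∈ Ioo a b, 0 < φ t) (ha : φ a = 0) (hb : φ b = 0) :
    ∃ t ∈ Ioo a b, -(π / (b - a)) ^ 2 ≤ q t := by
  by_contra! hq
  set k := π / (b - a)
  have hk : k * (b - a) = π := div_mul_cancel₀ _ (sub_ne_zero.mpr hab.ne')
  set W : ℝ → ℝ := fun t =>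
    φ t * (k * cos (k * (t - a))) - deriv φ t * sin (k * (t - a))
  have hW : ∀ t,
      HasDerivAt W (-(k ^ 2 * φ t + deriv (deriv φ) t) * sin (k * (t - a))) t := by
    intro t
    have hlin : HasDerivAt (fun u => k * (u - a)) k t := by
      simpa using ((hasDerivAt_id t).sub_const a).const_mul k
    have hsin := (hasDerivAt_sin _).comp t hlin
    have hcos := (hasDerivAt_cos _).comp t hlin
    exact (((hφ t).hasDerivAt.mul (hcos.const_mul k)).sub
      ((hφ' t).hasDerivAt.mul hsin)).congr_deriv (by simp only [Function.comp_apply]; ring)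
  have hmono : StrictMonoOn W (Icc a b) := by
    refine strictMonoOn_of_deriv_pos (convex_Icc a b)
      (fun t _ => (hW t).continuousAt.continuousWithinAt) fun t ht => ?_
    rw [interior_Icc] at ht
    have hsin : 0 < sin (k * (t - a)) := by
      refine sin_pos_of_pos_of_lt_pi (by have := ht.1; positivity) ?_
      rw [← hk]
      exact mul_lt_mul_of_pos_left (by linarith [ht.2]) (by have := ht.1; positivity)
    rw [(hW t).deriv, hode t ht]
    nlinarith [mul_pos (sub_pos.mpr (hq t ht)) (mul_pos (hpos t ht) hsin)]
  have hWa : W a = 0 := by simp [W, ha]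
  have hWb : W b = 0 := by simp [W, hb, hk]
  exact (hmono (left_mem_Icc.mpr hab.le) (right_mem_Icc.mpr hab.le) hab).ne (hWa.trans hWb.symm)

theorem exists_bounds_of_nodal_solution (hab : a < b) (hφ : Differentiable ℝ φ)
    (hφ' : Differentiable ℝ (deriv φ))
    (hode : ∀ t ∈ Ioo a b, deriv (deriv φ) t = q t * φ t)
    (hne : ∀ t ∈ Ioo a b, φ t ≠ 0) (ha : φ a = 0) (hb : φ b = 0) :
    (∃ t ∈ Ioo a b, q t ≤ 0) ∧ ∃ t ∈ Ioo a b, -(π / (b - a)) ^ 2 ≤ q t := by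
  obtain ⟨σ, hpos⟩ := isPreconnected_Ioo.exists_mul_pos hφ.continuous.continuousOn hne
  have hψ : Differentiable ℝ (fun t => σ * φ t) := hφ.const_mul σ
  have hderiv : deriv (fun t => σ * φ t) = fun t => σ * deriv φ t := deriv_const_mul_field' σ
  have hψ' : Differentiable ℝ (deriv (fun t => σ * φ t)) := hderiv ▸ hφ'.const_mul σ
  have hψode : ∀ t ∈ Ioo a b, deriv (deriv (fun t => σ * φ t)) t = q t * (σ * φ t) := by
    intro t ht
    rw [hderiv, deriv_const_mul_field', mul_left_comm, ← hode t ht]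
  exact ⟨exists_nonpos_of_pos_solution hab hψ hψode hpos (by simp [ha]) (by simp [hb]),
    exists_ge_of_pos_solution hab hψ hψ' hψode hpos (by simp [ha]) (by simp [hb])⟩

end NodalInterval

theorem mul_exp_le_of_neg_mul_le_deriv {f f' : ℝ → ℝ} {k x y : ℝ} (hxy : x ≤ y)
    (hf : ∀ t, HasDerivAt f (f' t) t) (h : ∀ t ∈ Ioo x y, -k * f t ≤ f' t) :
    f x * exp (-(k * (y - x))) ≤ f y := by
  have hg : ∀ t, HasDerivAt (fun t => f t * exp (k * t))
      ((f' t + k * f t) * exp (k * t)) t := fun t =>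
    ((hf t).mul (((hasDerivAt_id t).const_mul k).exp)).congr_deriv (by simp only [id]; ring)
  have hmono : MonotoneOn (fun t => f t * exp (k * t)) (Icc x y) := by
    refine monotoneOn_of_deriv_nonneg (convex_Icc x y)
      (fun t _ => (hg t).continuousAt.continuousWithinAt)
      (fun t _ => (hg t).differentiableAt.differentiableWithinAt) fun t ht => ?_
    rw [interior_Icc] at ht
    rw [(hg t).deriv]
    exact mul_nonneg (by linarith [h t ht]) (exp_pos _).le
  calc f x * exp (-(k * (y - x))) = f x * exp (k * x) * exp (-(k * y)) := by
        rw [mul_assoc, ← exp_add]; ring_nf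
    _ ≤ f y * exp (k * y) * exp (-(k * y)) :=
        mul_le_mul_of_nonneg_right (hmono (left_mem_Icc.mpr hxy) (right_mem_Icc.mpr hxy) hxy)
          (exp_pos _).le
    _ = f y := by rw [mul_assoc, ← exp_add, add_neg_cancel, exp_zero, mul_one]

theorem mul_exp_le_of_abs_deriv_le {f f' : ℝ → ℝ} {k a b x y : ℝ}
    (hf : ∀ t, HasDerivAt f (f' t) t) (h : ∀ t ∈ Ioo a b, |f' t| ≤ k * f t)
    (hx : x ∈ Icc a b) (hy : y ∈ Icc a b) : f x * exp (-(k * |y - x|)) ≤ f y := by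
  rcases le_total x y with hxy | hyx
  · rw [abs_of_nonneg (sub_nonneg.mpr hxy)]
    refine mul_exp_le_of_neg_mul_le_deriv hxy hf fun t ht => ?_
    have := abs_le.mp (h t (Ioo_subset_Ioo hx.1 hy.2 ht))
    linarith
  · rw [abs_of_nonpos (sub_nonpos.mpr hyx)]
    have hg : ∀ t, HasDerivAt (fun t => f (-t)) (-f' (-t)) t := fun t =>
      ((hf (-t)).comp t (hasDerivAt_neg t)).congr_deriv (mul_neg_one _)
    have := mul_exp_le_of_neg_mul_le_deriv (k := k) (neg_le_neg hyx) hg fun t ht => by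
      have hmem : -t ∈ Ioo a b :=
        Ioo_subset_Ioo hy.1 hx.2 ⟨by linarith [ht.2], by linarith [ht.1]⟩
      linarith [abs_le.mp (h (-t) hmem)]
    simpa [neg_add_eq_sub] using this

/-- `2 p (q f) + K (2 f p)` is the derivative of the energy `φ'² + K φ²` at a point where
`φ = f`, `φ' = p` and `φ'' = q φ`. -/
theorem abs_energy_deriv_le {p f q K : ℝ} (hK : 1 ≤ K) (hq : |q| ≤ K) :
    |2 * p * (q * f) + K * (2 * f * p)| ≤ 2 * K * (p ^ 2 + K * f ^ 2) := by
  have hqK : |q + K| ≤ 2 * K :=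
    (abs_add_le q K).trans (by rw [abs_of_pos (by linarith : (0 : ℝ) < K)]; linarith)
  have hpf : 2 * |p * f| ≤ p ^ 2 + K * f ^ 2 := by
    rw [abs_mul]
    nlinarith [sq_nonneg (|p| - |f|), sq_abs p, sq_abs f, sq_nonneg f]
  calc |2 * p * (q * f) + K * (2 * f * p)| = 2 * |p * f| * |q + K| := by
        rw [← abs_two, ← abs_mul, ← abs_mul]; ring_nf
    _ ≤ (p ^ 2 + K * f ^ 2) * (2 * K) := mul_le_mul hpf hqK (abs_nonneg _) (by positivity)
    _ = 2 * K * (p ^ 2 + K * f ^ 2) := by ring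

theorem energy_mul_exp_le {φ q : ℝ → ℝ} {K a b x y : ℝ} (hK : 1 ≤ K)
    (hφ : Differentiable ℝ φ) (hφ' : Differentiable ℝ (deriv φ))
    (hq : ∀ t ∈ Ioo a b, |q t| ≤ K)
    (hode : ∀ t ∈ Ioo a b, deriv (deriv φ) t = q t * φ t)
    (hx : x ∈ Icc a b) (hy : y ∈ Icc a b) :
    (deriv φ x ^ 2 + K * φ x ^ 2) * exp (-(2 * K * (b - a))) ≤
      deriv φ y ^ 2 + K * φ y ^ 2 := by
  have hE : ∀ t, HasDerivAt (fun t => deriv φ t ^ 2 + K * φ t ^ 2)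
      (2 * deriv φ t * deriv (deriv φ) t + K * (2 * φ t * deriv φ t)) t := fun t =>
    (((hφ' t).hasDerivAt.pow 2).add (((hφ t).hasDerivAt.pow 2).const_mul K)).congr_deriv
      (by push_cast; ring)
  refine le_trans ?_ (mul_exp_le_of_abs_deriv_le (f := fun t => deriv φ t ^ 2 + K * φ t ^ 2)
    (k := 2 * K) hE (fun t ht => ?_) hx hy)
  · gcongr
    rw [abs_le]; constructor <;> linarith [hx.1, hx.2, hy.1, hy.2]
  · rw [hode t ht]
    exact abs_energy_deriv_le hK (hq t ht)

theorem abs_sub_sub_deriv_mul_le {φ : ℝ → ℝ} {D : Set ℝ} {B x y : ℝ} (hD : Convex ℝ D)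
    (hφ : Differentiable ℝ φ) (hφ' : Differentiable ℝ (deriv φ))
    (hB : ∀ u ∈ D, |deriv (deriv φ) u| ≤ B) (hx : x ∈ D) (hy : y ∈ D) :
    |φ y - φ x - deriv φ x * (y - x)| ≤ B * (y - x) ^ 2 := by
  have hB0 : 0 ≤ B := (abs_nonneg _).trans (hB x hx)
  have hlip : ∀ u ∈ D, |deriv φ u - deriv φ x| ≤ B * |u - x| := fun u hu => by
    simpa only [Real.norm_eq_abs] using hD.norm_image_sub_le_of_norm_deriv_le
      (fun w _ => hφ' w) (fun w hw => by rw [Real.norm_eq_abs]; exact hB w hw) hx hu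
  have hg : ∀ u, HasDerivAt (fun u => φ u - φ x - deriv φ x * (u - x))
      (deriv φ u - deriv φ x) u := fun u =>
    (((hφ u).hasDerivAt.sub_const (φ x)).sub
      (((hasDerivAt_id u).sub_const x).const_mul (deriv φ x))).congr_deriv (by simp)
  have hbound : ∀ u ∈ D ∩ uIcc x y,
      ‖deriv (fun u => φ u - φ x - deriv φ x * (u - x)) u‖ ≤ B * |y - x| := fun u hu => by
    rw [(hg u).deriv, Real.norm_eq_abs]
    exact (hlip u hu.1).trans (mul_le_mul_of_nonneg_left (abs_sub_left_of_mem_uIcc hu.2) hB0)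
  have := (hD.inter (convex_uIcc x y)).norm_image_sub_le_of_norm_deriv_le
    (fun u _ => (hg u).differentiableAt) hbound ⟨hx, left_mem_uIcc⟩ ⟨hy, right_mem_uIcc⟩
  simp only [sub_self, mul_zero, sub_zero, Real.norm_eq_abs] at this
  rwa [mul_assoc, ← sq, sq_abs] at this

theorem exists_mem_uIcc_eq_zero_of_mul_nonpos {f : ℝ → ℝ} {x y : ℝ}
    (hf : ContinuousOn f (uIcc x y)) (hxy : f x * f y ≤ 0) : ∃ z ∈ uIcc x y, f z = 0 := by
  refine intermediate_value_uIcc hf (mem_uIcc.mpr ?_)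
  rcases mul_nonpos_iff.mp hxy with h | h
  exacts [Or.inr ⟨h.2, h.1⟩, Or.inl h]

/-- By Taylor's bound, the doubled Newton step `t = -2 φ s / φ' s` overshoots a zero of `φ`. -/
theorem infDist_zeroSet_le {φ : ℝ → ℝ} {a b B s : ℝ} (hφ : Differentiable ℝ φ)
    (hφ' : Differentiable ℝ (deriv φ)) (ha : φ a = 0) (hb : φ b = 0)
    (hB : ∀ u ∈ Icc a b, |deriv (deriv φ) u| ≤ B) (hs : s ∈ Icc a b)
    (hp : deriv φ s ≠ 0)
    (hsmall : 4 * B * |φ s| ≤ deriv φ s ^ 2) :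
    Metric.infDist s {u ∈ Icc a b | φ u = 0} ≤ 2 * |φ s| / |deriv φ s| := by
  set p := deriv φ s
  set t := -2 * φ s / p
  have ht : |t| = 2 * |φ s| / |p| := by simp [t, abs_div, abs_mul]
  have hZ : ∀ z ∈ {u ∈ Icc a b | φ u = 0},
      Metric.infDist s {u ∈ Icc a b | φ u = 0} ≤ |z - s| := fun z hz =>
    (Metric.infDist_le_dist_of_mem hz).trans_eq (by rw [Real.dist_eq, abs_sub_comm])
  rw [← ht]
  by_cases hst : s + t ∈ Icc a b
  · have hT := abs_sub_sub_deriv_mul_le (convex_Icc a b) hφ hφ' hB hs hst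
    have hpt : p * t = -2 * φ s := mul_div_cancel₀ _ hp
    have hp2 : 0 < p ^ 2 := by positivity
    have hrem : B * t ^ 2 ≤ |φ s| := by
      have : B * t ^ 2 * p ^ 2 = 4 * B * |φ s| * |φ s| := by
        rw [mul_assoc, ← mul_pow, mul_comm t, hpt]; ring_nf; rw [sq_abs]
      nlinarith [abs_nonneg (φ s)]
    rw [add_sub_cancel_left, hpt] at hT
    have hsign : φ s * φ (s + t) ≤ 0 := by
      have := abs_le.mp (hT.trans hrem)
      rcases le_total 0 (φ s) with h0 | h0
      · rw [abs_of_nonneg h0] at this; nlinarith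
      · rw [abs_of_nonpos h0] at this; nlinarith
    obtain ⟨z, hz, hz0⟩ :=
      exists_mem_uIcc_eq_zero_of_mul_nonpos hφ.continuous.continuousOn hsign
    refine (hZ z ⟨ordConnected_Icc.uIcc_subset hs hst hz, hz0⟩).trans ?_
    simpa using abs_sub_left_of_mem_uIcc hz
  · rw [mem_Icc, not_and_or, not_le, not_le] at hst
    rcases hst with h | h
    · exact (hZ a ⟨left_mem_Icc.mpr (hs.1.trans hs.2), ha⟩).trans
        (by rw [abs_of_nonpos (by linarith [hs.1])]; linarith [neg_abs_le t])
    · exact (hZ b ⟨right_mem_Icc.mpr (hs.1.trans hs.2), hb⟩).trans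
        (by rw [abs_of_nonneg (by linarith [hs.2])]; linarith [le_abs_self t])

section EnergyBound

variable {φ : ℝ → ℝ} {a b K M X s : ℝ}

theorem mul_infDist_zeroSet_le_of_abs_lt (hφ : Differentiable ℝ φ)
    (hφ' : Differentiable ℝ (deriv φ)) (ha : φ a = 0) (hb : φ b = 0) (hK : 1 ≤ K)
    (hM : 0 < M) (hX₀ : 0 < X) (hX₁ : X ≤ 1)
    (hB : ∀ u ∈ Icc a b, |deriv (deriv φ) u| ≤ K * M)
    (hE : ∀ u ∈ Icc a b, K * M ^ 2 * X ≤ deriv φ u ^ 2 + K * φ u ^ 2) (hs : s ∈ Icc a b)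
    (hφs : |φ s| < M * X / 8) :
    M * X / (8 * (b - a + 1)) * Metric.infDist s {u ∈ Icc a b | φ u = 0} ≤ |φ s| := by
  set c := M * X / (8 * (b - a + 1))
  set p := deriv φ s
  have hab : 0 ≤ b - a := by linarith [hs.1, hs.2]
  have hp : K * M ^ 2 * X / 2 ≤ p ^ 2 := by
    have hsq : φ s ^ 2 ≤ M ^ 2 * X / 2 := by
      rw [← sq_abs]
      nlinarith [abs_nonneg (φ s),
        mul_le_mul_of_nonneg_left hX₁ (by positivity : 0 ≤ M ^ 2 * X)]
    nlinarith [hE s hs, mul_le_mul_of_nonneg_left hsq (by linarith : (0 : ℝ) ≤ K)]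
  have hp₀ : p ≠ 0 := by
    rintro h0
    rw [h0] at hp
    nlinarith [(by positivity : 0 < M ^ 2 * X)]
  have hsmall : 4 * (K * M) * |φ s| ≤ p ^ 2 := by
    nlinarith [mul_le_mul_of_nonneg_left hφs.le (by positivity : (0 : ℝ) ≤ 4 * (K * M))]
  have h2c : 2 * c ≤ |p| := by
    refine (pow_le_pow_iff_left₀ (by positivity) (abs_nonneg p) two_ne_zero).mp ?_
    have h16 : X / (16 * (b - a + 1) ^ 2) ≤ K / 2 := by
      rw [div_le_iff₀ (by positivity)]
      nlinarith [mul_le_mul hX₁ hK zero_le_one (by linarith),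
        (by nlinarith : 1 ≤ (b - a + 1) ^ 2)]
    calc (2 * c) ^ 2 = M ^ 2 * X * (X / (16 * (b - a + 1) ^ 2)) := by
          simp only [c]; field_simp; ring
      _ ≤ M ^ 2 * X * (K / 2) := by gcongr
      _ = K * M ^ 2 * X / 2 := by ring
      _ ≤ |p| ^ 2 := by rwa [sq_abs]
  calc c * Metric.infDist s _ ≤ c * (2 * |φ s| / |p|) :=
        mul_le_mul_of_nonneg_left (infDist_zeroSet_le hφ hφ' ha hb hB hs hp₀ hsmall)
          (by positivity)
    _ = 2 * c / |p| * |φ s| := by ring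
    _ ≤ 1 * |φ s| := by gcongr; exact (div_le_one (abs_pos.mpr hp₀)).mpr h2c
    _ = |φ s| := one_mul _

theorem mul_infDist_zeroSet_le (hφ : Differentiable ℝ φ)
    (hφ' : Differentiable ℝ (deriv φ)) (ha : φ a = 0) (hb : φ b = 0) (hK : 1 ≤ K)
    (hM : 0 < M) (hX₀ : 0 < X) (hX₁ : X ≤ 1)
    (hB : ∀ u ∈ Icc a b, |deriv (deriv φ) u| ≤ K * M)
    (hE : ∀ u ∈ Icc a b, K * M ^ 2 * X ≤ deriv φ u ^ 2 + K * φ u ^ 2) (hs : s ∈ Icc a b) :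
    M * X / (8 * (b - a + 1)) * Metric.infDist s {u ∈ Icc a b | φ u = 0} ≤ |φ s| := by
  rcases lt_or_ge |φ s| (M * X / 8) with hφs | hφs
  · exact mul_infDist_zeroSet_le_of_abs_lt hφ hφ' ha hb hK hM hX₀ hX₁ hB hE hs hφs
  have ha' : a ∈ {u ∈ Icc a b | φ u = 0} := ⟨left_mem_Icc.mpr (hs.1.trans hs.2), ha⟩
  have hd : Metric.infDist s {u ∈ Icc a b | φ u = 0} ≤ b - a + 1 := by
    refine (Metric.infDist_le_dist_of_mem ha').trans ?_
    rw [Real.dist_eq, abs_of_nonneg (by linarith [hs.1])]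
    linarith [hs.2]
  have hab : 0 < b - a + 1 := by linarith [hs.1, hs.2]
  calc M * X / (8 * (b - a + 1)) * Metric.infDist s _
      ≤ M * X / (8 * (b - a + 1)) * (b - a + 1) := by gcongr
    _ = M * X / 8 := by field_simp
    _ ≤ |φ s| := hφs

end EnergyBound

theorem setIntegral_sq_le_of_abs_le {φ : ℝ → ℝ} {a b M : ℝ} (hab : a ≤ b)
    (hM : ∀ t ∈ Icc a b, |φ t| ≤ M) : ∫ t in Ioo a b, φ t ^ 2 ≤ M ^ 2 * (b - a) := by
  have hbound : ∀ t ∈ Ioo a b, ‖φ t ^ 2‖ ≤ M ^ 2 := fun t ht => by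
    rw [Real.norm_eq_abs, abs_pow]
    exact pow_le_pow_left₀ (abs_nonneg _) (hM t (Ioo_subset_Icc_self ht)) 2
  have := norm_setIntegral_le_of_norm_le_const (μ := MeasureTheory.volume) measure_Ioo_lt_top
    hbound
  rw [Real.volume_real_Ioo_of_le hab] at this
  exact (le_abs_self _).trans this

namespace IsDirichletEF

variable {L : ℝ} {v : ℝ → ℝ} {n : ℕ} {μ : ℝ} {φ : ℝ → ℝ}

theorem differentiable (h : IsDirichletEF L v n μ φ) : Differentiable ℝ φ :=
  h.1.differentiable (by norm_num)

theorem differentiable_deriv (h : IsDirichletEF L v n μ φ) : Differentiable ℝ (deriv φ) :=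
  h.1.differentiable_deriv_two

theorem continuous_deriv_deriv (h : IsDirichletEF L v n μ φ) :
    Continuous (deriv (deriv φ)) :=
  (h.1.deriv' (n := 1)).continuous_deriv le_rfl

theorem deriv_deriv_eq (h : IsDirichletEF L v n μ φ) :
    ∀ t ∈ Ioo 0 L, deriv (deriv φ) t = (v t - μ) * φ t := fun t ht => by
  linear_combination -h.2.2.1 t ht

theorem zeroSet_eq (h : IsDirichletEF L v n μ φ) (hL : 0 < L) :
    {u ∈ Icc 0 L | φ u = 0} = {u ∈ Ioo 0 L | φ u = 0} ∪ {0, L} := by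
  ext u
  simp only [mem_ofPred_eq, mem_union, mem_insert_iff, mem_singleton_iff, ← Icc_sdiff_both,
    mem_sdiff]
  constructor
  · rintro ⟨hu, h0⟩
    tauto
  · rintro (⟨⟨hu, -⟩, h0⟩ | rfl | rfl)
    · exact ⟨hu, h0⟩
    · exact ⟨left_mem_Icc.mpr hL.le, h.2.2.2.1⟩
    · exact ⟨right_mem_Icc.mpr hL.le, h.2.2.2.2.1⟩

theorem finite_zeroSet (h : IsDirichletEF L v n μ φ) (hL : 0 < L) :
    {u ∈ Icc 0 L | φ u = 0}.Finite := by
  rw [h.zeroSet_eq hL]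
  exact h.2.2.2.2.2.1.union (toFinite _)

theorem ncard_zeroSet (h : IsDirichletEF L v n μ φ) (hL : 0 < L) (hn : 1 ≤ n) :
    {u ∈ Icc 0 L | φ u = 0}.ncard = n + 1 := by
  have hdisj : Disjoint {u ∈ Ioo 0 L | φ u = 0} {0, L} := by
    rw [disjoint_left]
    rintro u ⟨⟨h0, hL⟩, -⟩ (rfl | rfl)
    exacts [lt_irrefl _ h0, lt_irrefl _ hL]
  rw [h.zeroSet_eq hL, ncard_union_eq hdisj h.2.2.2.2.2.1, h.2.2.2.2.2.2, ncard_pair hL.ne]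
  omega

theorem eigenvalue_bounds (h : IsDirichletEF L v n μ φ) (hL : 0 < L) (hn : 1 ≤ n) {C : ℝ}
    (hv : ∀ s ∈ Icc 0 L, |v s| ≤ C) : -C ≤ μ ∧ μ ≤ C + (π * n / L) ^ 2 := by
  obtain ⟨a, ha, b, hb, hab, hgap, hfree⟩ := (h.finite_zeroSet hL).exists_gap (fun _ hu => hu.1)
    ⟨left_mem_Icc.mpr hL.le, h.2.2.2.1⟩ ⟨right_mem_Icc.mpr hL.le, h.2.2.2.2.1⟩ (by omega)
    (h.ncard_zeroSet hL hn)
  have hsub : Ioo a b ⊆ Ioo 0 L := Ioo_subset_Ioo ha.1.1 hb.1.2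
  obtain ⟨⟨t₁, ht₁, hq₁⟩, t₂, ht₂, hq₂⟩ := exists_bounds_of_nodal_solution hab
    h.differentiable h.differentiable_deriv (fun t ht => h.deriv_deriv_eq t (hsub ht))
    (fun t ht h0 => hfree t ht ⟨Ioo_subset_Icc_self (hsub ht), h0⟩) ha.2 hb.2
  have hn' : (0 : ℝ) < n := by exact_mod_cast hn
  have hk : (π / (b - a)) ^ 2 ≤ (π * n / L) ^ 2 := by
    refine pow_le_pow_left₀ (div_nonneg pi_pos.le (sub_pos.mpr hab).le) ?_ 2
    calc π / (b - a) ≤ π / (L / n) := by gcongr; simpa using hgap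
      _ = π * n / L := by field_simp
  have hv₁ := abs_le.mp (hv t₁ (Ioo_subset_Icc_self (hsub ht₁)))
  have hv₂ := abs_le.mp (hv t₂ (Ioo_subset_Icc_self (hsub ht₂)))
  constructor <;> linarith

theorem exists_isMaxOn_abs (h : IsDirichletEF L v n μ φ) (hL : 0 < L) :
    ∃ s₀ ∈ Icc 0 L, 0 < |φ s₀| ∧ deriv φ s₀ = 0 ∧
      ∀ s ∈ Icc 0 L, |φ s| ≤ |φ s₀| := by
  obtain ⟨s₀, hs₀, hmax⟩ := isCompact_Icc.exists_isMaxOn (nonempty_Icc.mpr hL.le)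
    h.differentiable.continuous.abs.continuousOn
  obtain ⟨s₁, hs₁, hφs₁⟩ := h.2.1
  have hpos : 0 < |φ s₀| := (abs_pos.mpr hφs₁).trans_le (hmax hs₁)
  have hs₀' : s₀ ∈ Ioo 0 L := by
    refine ⟨hs₀.1.lt_of_ne ?_, hs₀.2.lt_of_ne ?_⟩ <;> rintro rfl
    exacts [hpos.ne' (by rw [h.2.2.2.1, abs_zero]), hpos.ne' (by rw [h.2.2.2.2.1, abs_zero])]
  have hloc : IsLocalMax (fun t => |φ t|) s₀ := hmax.isLocalMax (Icc_mem_nhds hs₀'.1 hs₀'.2)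
  have hextr : IsLocalExtr φ s₀ := by
    rcases lt_or_gt_of_ne (abs_pos.mp hpos) with hneg | hpos'
    · refine Or.inl (hloc.mono fun t ht => ?_)
      simp only [abs_of_neg hneg] at ht
      linarith [neg_abs_le (φ t)]
    · refine Or.inr (hloc.mono fun t ht => ?_)
      simp only [abs_of_pos hpos'] at ht
      linarith [le_abs_self (φ t)]
  exact ⟨s₀, hs₀, hpos, hextr.deriv_eq_zero, fun s hs => hmax hs⟩

theorem abs_deriv_deriv_le (h : IsDirichletEF L v n μ φ) (hL : 0 < L) {K M : ℝ}
    (hq : ∀ t ∈ Ioo 0 L, |v t - μ| ≤ K) (hM : ∀ t ∈ Icc 0 L, |φ t| ≤ M) :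
    ∀ t ∈ Icc 0 L, |deriv (deriv φ) t| ≤ K * M := by
  have hsub : Ioo 0 L ⊆ {t | |deriv (deriv φ) t| ≤ K * M} := fun t ht => by
    rw [mem_ofPred_eq, h.deriv_deriv_eq t ht, abs_mul]
    exact mul_le_mul (hq t ht) (hM t (Ioo_subset_Icc_self ht)) (abs_nonneg _)
      ((abs_nonneg _).trans (hq t ht))
  rw [← closure_Ioo hL.ne]
  exact closure_minimal hsub (isClosed_le h.continuous_deriv_deriv.abs continuous_const)

theorem exists_mul_infDist_le (h : IsDirichletEF L v n μ φ) (hL : 0 < L) {K : ℝ} (hK : 1 ≤ K)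
    (hq : ∀ t ∈ Ioo 0 L, |v t - μ| ≤ K) :
    ∃ M > 0, (∀ s ∈ Icc 0 L, |φ s| ≤ M) ∧ ∀ s ∈ Icc 0 L,
      M * exp (-(2 * K * L)) / (8 * (L + 1)) * Metric.infDist s {u ∈ Icc 0 L | φ u = 0} ≤
        |φ s| := by
  obtain ⟨s₀, hs₀, hM, hds₀, hmax⟩ := h.exists_isMaxOn_abs hL
  refine ⟨|φ s₀|, hM, hmax, fun s hs => ?_⟩
  have hE : ∀ u ∈ Icc 0 L,
      K * |φ s₀| ^ 2 * exp (-(2 * K * L)) ≤ deriv φ u ^ 2 + K * φ u ^ 2 := fun u hu =>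
    calc K * |φ s₀| ^ 2 * exp (-(2 * K * L))
        = (deriv φ s₀ ^ 2 + K * φ s₀ ^ 2) * exp (-(2 * K * (L - 0))) := by
          rw [hds₀, sq_abs, sub_zero]; ring
      _ ≤ _ := energy_mul_exp_le hK h.differentiable h.differentiable_deriv hq h.deriv_deriv_eq
          hs₀ hu
  have hX₁ : exp (-(2 * K * L)) ≤ 1 :=
    exp_le_one_iff.mpr (neg_nonpos.mpr (by positivity))
  simpa only [sub_zero] using mul_infDist_zeroSet_le h.differentiable h.differentiable_deriv
    h.2.2.2.1 h.2.2.2.2.1 hK hM (exp_pos _) hX₁ (h.abs_deriv_deriv_le hL hq hmax) hE hs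

end IsDirichletEF

theorem stmt4 (L C : ℝ) (hL : 0 < L) (hC : 0 < C) (n : ℕ) (hn : 1 ≤ n) :
    ∃ c > 0, ∀ v : ℝ → ℝ, ContinuousOn v (Set.Icc 0 L) →
      (∀ s ∈ Set.Icc (0:ℝ) L, |v s| ≤ C) →
      ∀ (μ : ℝ) (φ : ℝ → ℝ), IsDirichletEF L v n μ φ →
        (∫ s in Set.Ioo (0:ℝ) L, (φ s) ^ 2) = 1 →
        ∀ s ∈ Set.Icc (0:ℝ) L,
          c * Metric.infDist s {u | u ∈ Set.Icc (0:ℝ) L ∧ φ u = 0} ≤ |φ s| := by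
  set K := 2 * C + (π * n / L) ^ 2 + 1
  have hK : 1 ≤ K := by have := sq_nonneg (π * n / L); linarith
  refine ⟨exp (-(2 * K * L)) / (8 * (L + 1) * √L), by positivity,
    fun v _ hv μ φ h hnorm s hs => ?_⟩
  obtain ⟨hμ₁, hμ₂⟩ := h.eigenvalue_bounds hL hn hv
  have hq : ∀ t ∈ Ioo 0 L, |v t - μ| ≤ K := fun t ht => by
    have := abs_le.mp (hv t (Ioo_subset_Icc_self ht))
    rw [abs_le]; constructor <;> linarith [sq_nonneg (π * n / L)]
  obtain ⟨M, hM, hmax, hdist⟩ := h.exists_mul_infDist_le hL hK hq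
  have hM_sqrt : 1 ≤ M * √L := by
    refine (pow_le_pow_iff_left₀ zero_le_one (by positivity) two_ne_zero).mp ?_
    rw [mul_pow, Real.sq_sqrt hL.le, one_pow, ← hnorm]
    simpa using setIntegral_sq_le_of_abs_le hL.le hmax
  refine le_trans (mul_le_mul_of_nonneg_right ?_ Metric.infDist_nonneg) (hdist s hs)
  calc exp (-(2 * K * L)) / (8 * (L + 1) * √L)
      = M * exp (-(2 * K * L)) / (8 * (L + 1)) / (M * √L) := by field_simp
    _ ≤ M * exp (-(2 * K * L)) / (8 * (L + 1)) := div_le_self (by positivity) hM_sqrt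
end
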